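/- arXiv:2312.06341 — 3 statements merged into one kernel-verified Lean document; each statement's English description precedes it below -/
import Mathlib

section
/- Let a < b, α ∈ (1/2,1), σ > 0 and let L : ℝ×ℝ×[a,b] → ℝ be C¹ satisfying (L1), (L2) and (L3). Then the functional J is Gâteaux differentiable at every u ∈ H_0^{α,σ}(a,b), and for all u, v ∈ H_0^{α,σ}(a,b), the limit DJ(u)v := lim_{h→0} (J(u+hv) − J(u))/h exists and equals ∫_a^b [∂L/∂x(u(t), ^C D_{a+}^{α,σ}u(t), t)·v(t) + ∂L/∂y(u(t), ^C D_{a+}^{α,σ}u(t), t)·(^C D_{a+}^{α,σ}v)(t)] dt; moreover v ↦ DJ(u)v is a bounded linear functional on H_0^{α,σ}(a,b). -/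
open MeasureTheory Set Filter

/-- Left Riemann–Liouville tempered fractional integral `I_{a+}^{α,σ}u`. -/
noncomputable def tempIL (a α σ : ℝ) (u : ℝ → ℝ) (x : ℝ) : ℝ :=
  (1 / Real.Gamma α) * ∫ s in a..x, (x - s) ^ (α - 1) * Real.exp (-σ * (x - s)) * u s

/-- Right Riemann–Liouville tempered fractional integral `I_{b-}^{α,σ}u`. -/
noncomputable def tempIR (b α σ : ℝ) (u : ℝ → ℝ) (x : ℝ) : ℝ :=
  (1 / Real.Gamma α) * ∫ s in x..b, (s - x) ^ (α - 1) * Real.exp (-σ * (s - x)) * u s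

/-- Left Caputo tempered fractional derivative `^C D_{a+}^{α,σ}u`
(for absolutely continuous `u`). -/
noncomputable def tempCD (a α σ : ℝ) (u : ℝ → ℝ) (x : ℝ) : ℝ :=
  (Real.exp (-σ * x) / Real.Gamma (1 - α)) *
    ∫ s in a..x, (x - s) ^ (-α) * deriv (fun τ => Real.exp (σ * τ) * u τ) s

/-- Right Riemann–Liouville tempered fractional derivative `D_{b-}^{α,σ}v`. -/
noncomputable def tempDR (b α σ : ℝ) (v : ℝ → ℝ) (x : ℝ) : ℝ :=
  -(Real.exp (σ * x) / Real.Gamma (1 - α)) *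
    deriv (fun y => ∫ s in y..b, (s - y) ^ (-α) * Real.exp (-σ * s) * v s) x

/-- Membership in the tempered fractional Sobolev space `H₀^{α,σ}(a,b)`:
`u ∈ L²(a,b)`, `g ∈ L²(a,b)`, `u = I_{a+}^{α,σ} g` a.e. on `(a,b)`, and the
continuous representative vanishes at `b`.  One writes `^C D_{a+}^{α,σ}u := g`. -/
def MemH0 (a b α σ : ℝ) (u g : ℝ → ℝ) : Prop :=
  MeasureTheory.MemLp u 2 (MeasureTheory.volume.restrict (Set.Ioo a b)) ∧
  MeasureTheory.MemLp g 2 (MeasureTheory.volume.restrict (Set.Ioo a b)) ∧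
  (∀ᵐ x ∂(MeasureTheory.volume.restrict (Set.Ioo a b)), u x = tempIL a α σ g x) ∧
  tempIL a α σ g b = 0

/-- The norm of `H₀^{α,σ}(a,b)`: `‖u‖ = (‖u‖²_{L²} + ‖g‖²_{L²})^{1/2}` where `g = ^C D u`. -/
noncomputable def H0norm (a b : ℝ) (u g : ℝ → ℝ) : ℝ :=
  Real.sqrt ((∫ x in Set.Ioo a b, u x ^ 2) + (∫ x in Set.Ioo a b, g x ^ 2))

/-- The Lagrangian functional `J(u) = ∫_a^b L(u(t), ^C D_{a+}^{α,σ}u(t), t) dt`,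
expressed in terms of the pair `(u, g)` with `g = ^C D_{a+}^{α,σ}u`. -/
noncomputable def Jfun (a b : ℝ) (L : ℝ → ℝ → ℝ → ℝ) (u g : ℝ → ℝ) : ℝ :=
  ∫ t in Set.Ioo a b, L (u t) (g t) t

/-- Partial derivative `∂L/∂x` of the Lagrangian w.r.t. its first variable. -/
noncomputable def Lx (L : ℝ → ℝ → ℝ → ℝ) (x y t : ℝ) : ℝ := deriv (fun z => L z y t) x

/-- Partial derivative `∂L/∂y` of the Lagrangian w.r.t. its second variable. -/
noncomputable def Ly (L : ℝ → ℝ → ℝ → ℝ) (x y t : ℝ) : ℝ := deriv (fun z => L x z t) y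

/-- Lower incomplete gamma function `γ(α,x) = ∫₀ˣ t^{α-1} e^{-t} dt`. -/
noncomputable def lincGamma (α x : ℝ) : ℝ := ∫ t in (0:ℝ)..x, t ^ (α - 1) * Real.exp (-t)

section Aux
open MeasureTheory Set Filter

lemma rpow_le_one_add_sq' {x d : ℝ} (hx : 0 ≤ x) (hd0 : 0 < d) (hd : d ≤ 2) :
    x ^ d ≤ 1 + x ^ 2 := by
  rcases le_or_gt x 1 with h | h
  · have : x ^ d ≤ 1 := Real.rpow_le_one hx h hd0.le
    nlinarith [sq_nonneg x]
  · have h1 : x ^ d ≤ x ^ (2:ℝ) := Real.rpow_le_rpow_of_exponent_le h.le hd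
    rw [Real.rpow_two] at h1
    linarith

lemma rpow_le_one_add' {x d : ℝ} (hx : 0 ≤ x) (hd0 : 0 < d) (hd : d ≤ 1) :
    x ^ d ≤ 1 + x := by
  rcases le_or_gt x 1 with h | h
  · have : x ^ d ≤ 1 := Real.rpow_le_one hx h hd0.le
    linarith
  · have h1 : x ^ d ≤ x ^ (1:ℝ) := Real.rpow_le_rpow_of_exponent_le h.le hd
    rw [Real.rpow_one] at h1
    linarith

section LxLy
variable {L : ℝ → ℝ → ℝ → ℝ}
  (hL : ContDiff ℝ 1 (fun p : ℝ × ℝ × ℝ => L p.1 p.2.1 p.2.2))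

include hL

lemma lx_eq_fderiv (x y t : ℝ) :
    Lx L x y t = fderiv ℝ (fun p : ℝ × ℝ × ℝ => L p.1 p.2.1 p.2.2) (x, y, t) (1, 0, 0) := by
  have hline : HasDerivAt (fun z : ℝ => ((z, y, t) : ℝ × ℝ × ℝ)) (1, 0, 0) x :=
    (hasDerivAt_id x).prodMk ((hasDerivAt_const x y).prodMk (hasDerivAt_const x t))
  have h1 : HasDerivAt (fun z : ℝ => L z y t)
      (fderiv ℝ (fun p : ℝ × ℝ × ℝ => L p.1 p.2.1 p.2.2) (x, y, t) (1, 0, 0)) x :=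
    by
    have hd := (hL.differentiable (by norm_num) (x, y, t)).hasFDerivAt
    exact hd.comp_hasDerivAt x hline
  exact h1.deriv

lemma ly_eq_fderiv (x y t : ℝ) :
    Ly L x y t = fderiv ℝ (fun p : ℝ × ℝ × ℝ => L p.1 p.2.1 p.2.2) (x, y, t) (0, 1, 0) := by
  have hline : HasDerivAt (fun z : ℝ => ((x, z, t) : ℝ × ℝ × ℝ)) (0, 1, 0) y :=
    (hasDerivAt_const y x).prodMk ((hasDerivAt_id y).prodMk (hasDerivAt_const y t))
  have h1 : HasDerivAt (fun z : ℝ => L x z t)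
      (fderiv ℝ (fun p : ℝ × ℝ × ℝ => L p.1 p.2.1 p.2.2) (x, y, t) (0, 1, 0)) y :=
    by
    have hd := (hL.differentiable (by norm_num) (x, y, t)).hasFDerivAt
    exact hd.comp_hasDerivAt y hline
  exact h1.deriv

lemma lx_continuous : Continuous (fun p : ℝ × ℝ × ℝ => Lx L p.1 p.2.1 p.2.2) := by
  have h : Continuous (fderiv ℝ (fun p : ℝ × ℝ × ℝ => L p.1 p.2.1 p.2.2)) :=
    hL.continuous_fderiv one_ne_zero
  have : Continuous (fun p : ℝ × ℝ × ℝ =>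
      fderiv ℝ (fun p : ℝ × ℝ × ℝ => L p.1 p.2.1 p.2.2) p ((1:ℝ), (0:ℝ), (0:ℝ))) :=
    h.clm_apply continuous_const
  convert this using 2 with p
  exact lx_eq_fderiv hL p.1 p.2.1 p.2.2

lemma ly_continuous : Continuous (fun p : ℝ × ℝ × ℝ => Ly L p.1 p.2.1 p.2.2) := by
  have h : Continuous (fderiv ℝ (fun p : ℝ × ℝ × ℝ => L p.1 p.2.1 p.2.2)) :=
    hL.continuous_fderiv one_ne_zero
  have : Continuous (fun p : ℝ × ℝ × ℝ =>
      fderiv ℝ (fun p : ℝ × ℝ × ℝ => L p.1 p.2.1 p.2.2) p ((0:ℝ), (1:ℝ), (0:ℝ))) :=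
    h.clm_apply continuous_const
  convert this using 2 with p
  exact ly_eq_fderiv hL p.1 p.2.1 p.2.2

lemma hasDerivAt_L_line (x y t vx vy h₀ : ℝ) :
    HasDerivAt (fun h : ℝ => L (x + h * vx) (y + h * vy) t)
      (Lx L (x + h₀ * vx) (y + h₀ * vy) t * vx + Ly L (x + h₀ * vx) (y + h₀ * vy) t * vy) h₀ := by
  have hφ : HasDerivAt (fun h : ℝ => ((x + h * vx, y + h * vy, t) : ℝ × ℝ × ℝ))
      (vx, vy, 0) h₀ := by
    have h1 : HasDerivAt (fun h : ℝ => x + h * vx) vx h₀ := by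
      simpa using ((hasDerivAt_id h₀).mul_const vx).const_add x
    have h2 : HasDerivAt (fun h : ℝ => y + h * vy) vy h₀ := by
      simpa using ((hasDerivAt_id h₀).mul_const vy).const_add y
    exact h1.prodMk (h2.prodMk (hasDerivAt_const h₀ t))
  have := ((hL.differentiable one_ne_zero _).hasFDerivAt).comp_hasDerivAt h₀ hφ
  refine this.congr_deriv ?_
  have hsum : ((vx, vy, (0:ℝ)) : ℝ × ℝ × ℝ)
      = vx • ((1:ℝ), (0:ℝ), (0:ℝ)) + vy • ((0:ℝ), (1:ℝ), (0:ℝ)) := by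
    simp [Prod.ext_iff]
  rw [hsum, map_add, (fderiv ℝ _ _).map_smul, (fderiv ℝ _ _).map_smul,
    lx_eq_fderiv hL, ly_eq_fderiv hL]
  simp [smul_eq_mul]; ring

end LxLy

lemma tempIL_abs_le (a b α σ : ℝ) (hab : a < b) (hα : α ∈ Set.Ioo (1/2 : ℝ) 1) (hσ : 0 < σ)
    (g : ℝ → ℝ) (hg : MemLp g 2 (volume.restrict (Set.Ioo a b)))
    (x : ℝ) (hx : x ∈ Set.Icc a b) :
    |tempIL a α σ g x| ≤ (1 / Real.Gamma α) * Real.sqrt ((b - a) ^ (2*α-1) / (2*α-1)) *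
      Real.sqrt (∫ t in Set.Ioo a b, g t ^ 2) := by
  obtain ⟨hα1, hα2⟩ := hα
  have hax : a ≤ x := hx.1
  have hxb : x ≤ b := hx.2
  have hΓ : 0 < Real.Gamma α := Real.Gamma_pos_of_pos (by linarith)
  set k : ℝ → ℝ := fun s => (x - s) ^ (α - 1) * Real.exp (-σ * (x - s)) with hk_def
  set μ₀ : Measure ℝ := volume.restrict (Set.Ioc a x) with hμ₀
  have hres : μ₀ ≤ volume.restrict (Set.Ioo a b) := by
    have hne : ∀ᵐ y : ℝ ∂volume, y ≠ b := by
      rw [ae_iff]; simpa using measure_singleton b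
    refine Measure.restrict_mono' ?_ le_rfl
    filter_upwards [hne] with y hy hmem
    exact ⟨hmem.1, lt_of_le_of_ne (le_trans hmem.2 hx.2) hy⟩
  have hg0 : MemLp g 2 μ₀ := hg.mono_measure hres
  have hkm : Measurable k := by
    apply Measurable.mul
    · exact (measurable_const.sub measurable_id).pow measurable_const
    · exact (measurable_const.mul (measurable_const.sub measurable_id)).exp
  have hmdom : IntegrableOn (fun s => (x - s) ^ (2*α-2)) (Set.Ioc a x) := by
    have h1 : IntervalIntegrable (fun t : ℝ => t ^ (2*α-2)) volume 0 (x - a) :=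
      intervalIntegral.intervalIntegrable_rpow' (by linarith)
    have h2 := h1.comp_sub_left x
    simp only [sub_sub_cancel, sub_zero] at h2
    exact (intervalIntegrable_iff_integrableOn_Ioc_of_le hax).mp h2.symm
  have hksq_le : ∀ s ∈ Set.Ioc a x, k s ^ 2 ≤ (x - s) ^ (2*α-2) := by
    intro s hs
    rcases eq_or_lt_of_le hs.2 with h | h
    · have : x - s = 0 := by rw [h]; ring
      simp only [hk_def, this]
      rw [Real.zero_rpow (by linarith), Real.zero_rpow (by linarith)]
      norm_num
    · have hy : (0:ℝ) < x - s := by linarith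
      have h1 : k s ^ 2 = (x - s) ^ (2*α-2) * Real.exp (-σ * (x - s)) ^ 2 := by
        rw [hk_def]
        rw [mul_pow, ← Real.rpow_natCast ((x - s) ^ (α - 1)) 2, ← Real.rpow_mul hy.le]
        norm_num; ring_nf
      rw [h1]
      have h2 : Real.exp (-σ * (x - s)) ^ 2 ≤ 1 := by
        rw [← Real.exp_nat_mul]
        exact Real.exp_le_one_iff.mpr (by push_cast; nlinarith)
      have h3 : (0:ℝ) ≤ (x - s) ^ (2*α-2) := Real.rpow_nonneg hy.le _
      nlinarith
  have hksq_int : Integrable (fun s => k s ^ 2) μ₀ := by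
    refine Integrable.mono' hmdom ((hkm.pow_const 2).aestronglyMeasurable) ?_
    filter_upwards [ae_restrict_mem measurableSet_Ioc] with s hs
    rw [Real.norm_eq_abs, abs_of_nonneg (sq_nonneg _)]
    exact hksq_le s hs
  have hk2 : MemLp k 2 μ₀ :=
    (memLp_two_iff_integrable_sq hkm.aestronglyMeasurable).mpr hksq_int
  have hpq : Real.HolderConjugate 2 2 := Real.HolderConjugate.two_two
  have hofReal : (ENNReal.ofReal 2) = 2 := by norm_num
  have holder := integral_mul_norm_le_Lp_mul_Lq (μ := μ₀) hpq
    (by rw [hofReal]; exact hk2) (by rw [hofReal]; exact hg0)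
  have hnorm2 : ∀ f : ℝ → ℝ, ∀ s, ‖f s‖ ^ (2:ℝ) = f s ^ 2 := by
    intro f s
    rw [Real.rpow_two, Real.norm_eq_abs, sq_abs]
  have hkint_le : ∫ s, k s ^ 2 ∂μ₀ ≤ (b - a) ^ (2*α-1) / (2*α-1) := by
    have h1 : ∫ s, k s ^ 2 ∂μ₀ ≤ ∫ s in Set.Ioc a x, (x - s) ^ (2*α-2) :=
      setIntegral_mono_on hksq_int hmdom measurableSet_Ioc hksq_le
    have h2 : ∫ s in Set.Ioc a x, (x - s) ^ (2*α-2) = (x - a) ^ (2*α-1) / (2*α-1) := by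
      rw [← intervalIntegral.integral_of_le hax,
        intervalIntegral.integral_comp_sub_left (fun t => t ^ (2*α-2)) x]
      simp only [sub_self, sub_sub_cancel]
      rw [integral_rpow (Or.inl (by linarith))]
      rw [Real.zero_rpow (by linarith)]
      ring_nf
    have h3 : (x - a) ^ (2*α-1) ≤ (b - a) ^ (2*α-1) :=
      Real.rpow_le_rpow (by linarith) (by linarith) (by linarith)
    calc ∫ s, k s ^ 2 ∂μ₀ ≤ (x - a) ^ (2*α-1) / (2*α-1) := h1.trans_eq h2
      _ ≤ (b - a) ^ (2*α-1) / (2*α-1) := by gcongr; linarith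
  have hgint : Integrable (fun t => g t ^ 2) (volume.restrict (Set.Ioo a b)) := hg.integrable_sq
  have hgint_le : ∫ s, g s ^ 2 ∂μ₀ ≤ ∫ t in Set.Ioo a b, g t ^ 2 :=
    integral_mono_measure hres (Eventually.of_forall fun s => sq_nonneg _) hgint
  simp only [hnorm2] at holder
  have habs : |∫ s in a..x, k s * g s| ≤ ∫ s, ‖k s‖ * ‖g s‖ ∂μ₀ := by
    rw [intervalIntegral.integral_of_le hax]
    calc |∫ s in Set.Ioc a x, k s * g s| ≤ ∫ s in Set.Ioc a x, ‖k s * g s‖ := by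
          rw [← Real.norm_eq_abs]
          exact norm_integral_le_integral_norm _
      _ = ∫ s, ‖k s‖ * ‖g s‖ ∂μ₀ := by
          refine integral_congr_ae (Eventually.of_forall fun s => ?_)
          exact norm_mul _ _
  have hI : |∫ s in a..x, k s * g s| ≤
      Real.sqrt ((b - a) ^ (2*α-1) / (2*α-1)) * Real.sqrt (∫ t in Set.Ioo a b, g t ^ 2) := by
    refine habs.trans (holder.trans ?_)
    rw [← Real.sqrt_eq_rpow, ← Real.sqrt_eq_rpow]
    exact mul_le_mul (Real.sqrt_le_sqrt hkint_le) (Real.sqrt_le_sqrt hgint_le)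
      (Real.sqrt_nonneg _) (Real.sqrt_nonneg _)
  have hΓinv : (0:ℝ) ≤ 1 / Real.Gamma α := by positivity
  calc |tempIL a α σ g x| = (1 / Real.Gamma α) * |∫ s in a..x, k s * g s| := by
        rw [tempIL, abs_mul, abs_of_nonneg hΓinv]
    _ ≤ 1 / Real.Gamma α * (Real.sqrt ((b - a) ^ (2*α-1) / (2*α-1)) *
          Real.sqrt (∫ t in Set.Ioo a b, g t ^ 2)) :=
        mul_le_mul_of_nonneg_left hI hΓinv
    _ = _ := by ring

end Aux

set_option maxHeartbeats 4000000 in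
/-- Gâteaux differentiability of the Lagrangian functional `J` under (L1)–(L3):
the directional derivative `DJ(u)v` exists for all `u, v ∈ H₀^{α,σ}(a,b)`,
equals `∫_a^b (∂L/∂x · v + ∂L/∂y · ^C D v)`, and `v ↦ DJ(u)v` is bounded. -/
theorem gateaux_differentiability
    (a b α σ : ℝ) (hab : a < b) (hα : α ∈ Set.Ioo (1/2 : ℝ) 1) (hσ : 0 < σ)
    (L : ℝ → ℝ → ℝ → ℝ)
    (hL : ContDiff ℝ 1 (fun p : ℝ × ℝ × ℝ => L p.1 p.2.1 p.2.2))
    (d₁ : ℝ) (hd₁ : d₁ ∈ Set.Ioc (0:ℝ) 2) (r₁ s₁ : ℝ → ℝ → ℝ)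
    (hr₁ : Continuous (fun p : ℝ × ℝ => r₁ p.1 p.2))
    (hs₁ : Continuous (fun p : ℝ × ℝ => s₁ p.1 p.2))
    (hr₁0 : ∀ x t, 0 ≤ r₁ x t) (hs₁0 : ∀ x t, 0 ≤ s₁ x t)
    (hL1 : ∀ x y t, t ∈ Set.Icc a b →
      |L x y t - L x 0 t| ≤ r₁ x t * |y| ^ d₁ + s₁ x t)
    (d₂ : ℝ) (hd₂ : d₂ ∈ Set.Ioc (0:ℝ) 2) (r₂ s₂ : ℝ → ℝ → ℝ)
    (hr₂ : Continuous (fun p : ℝ × ℝ => r₂ p.1 p.2))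
    (hs₂ : Continuous (fun p : ℝ × ℝ => s₂ p.1 p.2))
    (hr₂0 : ∀ x t, 0 ≤ r₂ x t) (hs₂0 : ∀ x t, 0 ≤ s₂ x t)
    (hL2 : ∀ x y t, t ∈ Set.Icc a b →
      |Lx L x y t| ≤ r₂ x t * |y| ^ d₂ + s₂ x t)
    (d₃ : ℝ) (hd₃ : d₃ ∈ Set.Ioc (0:ℝ) 1) (r₃ s₃ : ℝ → ℝ → ℝ)
    (hr₃ : Continuous (fun p : ℝ × ℝ => r₃ p.1 p.2))
    (hs₃ : Continuous (fun p : ℝ × ℝ => s₃ p.1 p.2))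
    (hr₃0 : ∀ x t, 0 ≤ r₃ x t) (hs₃0 : ∀ x t, 0 ≤ s₃ x t)
    (hL3 : ∀ x y t, t ∈ Set.Icc a b →
      |Ly L x y t| ≤ r₃ x t * |y| ^ d₃ + s₃ x t)
    (u gu : ℝ → ℝ) (hu : MemH0 a b α σ u gu) :
    (∀ v gv : ℝ → ℝ, MemH0 a b α σ v gv →
      Filter.Tendsto
        (fun h : ℝ =>
          (Jfun a b L (fun t => u t + h * v t) (fun t => gu t + h * gv t)
            - Jfun a b L u gu) / h)
        (nhdsWithin (0:ℝ) {(0:ℝ)}ᶜ)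
        (nhds (∫ t in Set.Ioo a b,
          (Lx L (u t) (gu t) t * v t + Ly L (u t) (gu t) t * gv t)))) ∧
    (∃ C : ℝ, ∀ v gv : ℝ → ℝ, MemH0 a b α σ v gv →
      |∫ t in Set.Ioo a b,
        (Lx L (u t) (gu t) t * v t + Ly L (u t) (gu t) t * gv t)|
          ≤ C * H0norm a b v gv) := by
  classical
  obtain ⟨huL2, hgu2, huae, -⟩ := hu
  obtain ⟨hα1, hα2⟩ := hα
  set μ : Measure ℝ := volume.restrict (Set.Ioo a b) with hμdef
  haveI : IsFiniteMeasure μ := by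
    constructor
    rw [hμdef, Measure.restrict_apply_univ]
    exact measure_Ioo_lt_top
  have hΓ : 0 < Real.Gamma α := Real.Gamma_pos_of_pos (by linarith)
  set Kc : ℝ := (1 / Real.Gamma α) * Real.sqrt ((b - a) ^ (2*α-1) / (2*α-1)) with hKc
  have hKc0 : 0 ≤ Kc := by positivity
  set Mu : ℝ := Kc * Real.sqrt (∫ t in Set.Ioo a b, gu t ^ 2) with hMu
  have hMu0 : 0 ≤ Mu := by positivity
  have huabs : ∀ᵐ t ∂μ, |u t| ≤ Mu := by
    filter_upwards [huae, ae_restrict_mem measurableSet_Ioo] with t h1 h2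
    rw [h1]
    exact tempIL_abs_le a b α σ hab ⟨hα1, hα2⟩ hσ gu hgu2 t (Set.Ioo_subset_Icc_self h2)
  have hum := huL2.aestronglyMeasurable
  have hgum := hgu2.aestronglyMeasurable
  have hid : AEStronglyMeasurable (fun t : ℝ => t) μ := aestronglyMeasurable_id
  have cLx := lx_continuous hL
  have cLy := ly_continuous hL
  constructor
  · -- Part 1: Gateaux differentiability
    intro v gv hv
    obtain ⟨hvL2, hgv2, hvae, -⟩ := hv
    have hvm := hvL2.aestronglyMeasurable
    have hgvm := hgv2.aestronglyMeasurable
    set Mv : ℝ := Kc * Real.sqrt (∫ t in Set.Ioo a b, gv t ^ 2) with hMv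
    have hMv0 : 0 ≤ Mv := by positivity
    have hvabs : ∀ᵐ t ∂μ, |v t| ≤ Mv := by
      filter_upwards [hvae, ae_restrict_mem measurableSet_Ioo] with t h1 h2
      rw [h1]
      exact tempIL_abs_le a b α σ hab ⟨hα1, hα2⟩ hσ gv hgv2 t (Set.Ioo_subset_Icc_self h2)
    set M : ℝ := Mu + Mv with hM
    have hM0 : 0 ≤ M := add_nonneg hMu0 hMv0
    have hcomp : IsCompact ((Set.Icc (-M) M) ×ˢ (Set.Icc a b)) :=
      isCompact_Icc.prod isCompact_Icc
    obtain ⟨R₂, hR₂⟩ := hcomp.exists_bound_of_continuousOn hr₂.continuousOn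
    obtain ⟨S₂, hS₂⟩ := hcomp.exists_bound_of_continuousOn hs₂.continuousOn
    obtain ⟨R₃, hR₃⟩ := hcomp.exists_bound_of_continuousOn hr₃.continuousOn
    obtain ⟨S₃, hS₃⟩ := hcomp.exists_bound_of_continuousOn hs₃.continuousOn
    obtain ⟨R₁, hR₁⟩ := hcomp.exists_bound_of_continuousOn hr₁.continuousOn
    obtain ⟨S₁, hS₁⟩ := hcomp.exists_bound_of_continuousOn hs₁.continuousOn
    have hcont0 : Continuous (fun p : ℝ × ℝ => L p.1 0 p.2) := by
      have : Continuous (fun p : ℝ × ℝ => ((p.1, 0, p.2) : ℝ × ℝ × ℝ)) :=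
        continuous_fst.prodMk (continuous_const.prodMk continuous_snd)
      exact hL.continuous.comp this
    obtain ⟨C₀, hC₀⟩ := hcomp.exists_bound_of_continuousOn hcont0.continuousOn
    have hmempt : ((0:ℝ), a) ∈ (Set.Icc (-M) M) ×ˢ (Set.Icc a b) := by
      refine ⟨?_, ?_⟩
      · show (0:ℝ) ∈ Set.Icc (-M) M
        exact Set.mem_Icc.mpr ⟨by linarith, hM0⟩
      · show a ∈ Set.Icc a b
        exact ⟨le_rfl, hab.le⟩
    have hR₂0 : 0 ≤ R₂ := le_trans (norm_nonneg _) (hR₂ _ hmempt)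
    have hS₂0 : 0 ≤ S₂ := le_trans (norm_nonneg _) (hS₂ _ hmempt)
    have hR₃0 : 0 ≤ R₃ := le_trans (norm_nonneg _) (hR₃ _ hmempt)
    have hS₃0 : 0 ≤ S₃ := le_trans (norm_nonneg _) (hS₃ _ hmempt)
    have hR₁0 : 0 ≤ R₁ := le_trans (norm_nonneg _) (hR₁ _ hmempt)
    have hS₁0 : 0 ≤ S₁ := le_trans (norm_nonneg _) (hS₁ _ hmempt)
    have hC₀0 : 0 ≤ C₀ := le_trans (norm_nonneg _) (hC₀ _ hmempt)
    set F : ℝ → ℝ → ℝ := fun h t => L (u t + h * v t) (gu t + h * gv t) t with hF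
    set F' : ℝ → ℝ → ℝ := fun h t =>
      Lx L (u t + h * v t) (gu t + h * gv t) t * v t +
      Ly L (u t + h * v t) (gu t + h * gv t) t * gv t with hF'
    set W : ℝ → ℝ := fun t => 1 + gu t ^ 2 + gv t ^ 2 with hW
    have hW_int : Integrable W μ :=
      ((integrable_const 1).add hgu2.integrable_sq).add hgv2.integrable_sq
    have hWt : ∀ t, W t = 1 + gu t ^ 2 + gv t ^ 2 := fun t => rfl
    have hW1 : ∀ t, (1:ℝ) ≤ W t := fun t => by
      rw [hWt]; nlinarith [sq_nonneg (gu t), sq_nonneg (gv t)]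
    have hW0 : ∀ t, (0:ℝ) ≤ W t := fun t => le_trans zero_le_one (hW1 t)
    set C₁ : ℝ := 2*(R₂+S₂)*(Mv+1) + 4*(R₃+S₃+1) with hC₁
    have hmeas3 : ∀ h : ℝ, AEStronglyMeasurable
        (fun t => ((u t + h * v t, gu t + h * gv t, t) : ℝ × ℝ × ℝ)) μ := fun h =>
      (hum.add (hvm.const_mul h)).prodMk ((hgum.add (hgvm.const_mul h)).prodMk hid)
    have hF_meas : ∀ h : ℝ, AEStronglyMeasurable (F h) μ := fun h =>
      hL.continuous.comp_aestronglyMeasurable (hmeas3 h)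
    have hF'_meas : AEStronglyMeasurable (F' 0) μ :=
      ((cLx.comp_aestronglyMeasurable (hmeas3 0)).mul hvm).add
        ((cLy.comp_aestronglyMeasurable (hmeas3 0)).mul hgvm)
    have hbound_int : Integrable (fun t => C₁ * W t) μ := hW_int.const_mul C₁
    have h_bound : ∀ᵐ t ∂μ, ∀ h ∈ Metric.ball (0:ℝ) 1, ‖F' h t‖ ≤ C₁ * W t := by
      filter_upwards [huabs, hvabs, ae_restrict_mem measurableSet_Ioo] with t hut hvt ht
      intro h hh
      have hh1 : |h| ≤ 1 := by
        rw [Metric.mem_ball, Real.dist_eq, sub_zero] at hh; exact hh.le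
      have htI : t ∈ Set.Icc a b := Set.Ioo_subset_Icc_self ht
      have hXabs : |u t + h * v t| ≤ M := by
        calc |u t + h * v t| ≤ |u t| + |h * v t| := abs_add_le _ _
          _ = |u t| + |h| * |v t| := by rw [abs_mul]
          _ ≤ Mu + 1 * Mv := add_le_add hut
              (mul_le_mul hh1 hvt (abs_nonneg _) zero_le_one)
          _ = M := by rw [one_mul]
      have hX : (u t + h * v t, t) ∈ (Set.Icc (-M) M) ×ˢ (Set.Icc a b) :=
        ⟨Set.mem_Icc.mpr (abs_le.mp hXabs), htI⟩
      have hY : |gu t + h * gv t| ≤ |gu t| + |gv t| := by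
        calc |gu t + h * gv t| ≤ |gu t| + |h * gv t| := abs_add_le _ _
          _ = |gu t| + |h| * |gv t| := by rw [abs_mul]
          _ ≤ |gu t| + 1 * |gv t| := by
              have := mul_le_mul_of_nonneg_right hh1 (abs_nonneg (gv t))
              linarith
          _ = _ := by rw [one_mul]
      have e2 : |Lx L (u t + h * v t) (gu t + h * gv t) t| ≤
          R₂ * (1 + (|gu t| + |gv t|) ^ 2) + S₂ := by
        refine (hL2 _ _ t htI).trans ?_
        have b1 : r₂ (u t + h * v t) t ≤ R₂ :=
          (le_abs_self _).trans (by rw [← Real.norm_eq_abs]; exact hR₂ _ hX)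
        have b2 : s₂ (u t + h * v t) t ≤ S₂ :=
          (le_abs_self _).trans (by rw [← Real.norm_eq_abs]; exact hS₂ _ hX)
        have b3 : |gu t + h * gv t| ^ d₂ ≤ 1 + (|gu t| + |gv t|) ^ 2 := by
          calc |gu t + h * gv t| ^ d₂ ≤ (|gu t| + |gv t|) ^ d₂ :=
                Real.rpow_le_rpow (abs_nonneg _) hY hd₂.1.le
            _ ≤ 1 + (|gu t| + |gv t|) ^ 2 :=
                rpow_le_one_add_sq' (by positivity) hd₂.1 hd₂.2
        have hb := mul_le_mul b1 b3 (Real.rpow_nonneg (abs_nonneg _) _) hR₂0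
        linarith
      have e3 : |Ly L (u t + h * v t) (gu t + h * gv t) t| ≤
          R₃ * (1 + (|gu t| + |gv t|)) + S₃ := by
        refine (hL3 _ _ t htI).trans ?_
        have b1 : r₃ (u t + h * v t) t ≤ R₃ :=
          (le_abs_self _).trans (by rw [← Real.norm_eq_abs]; exact hR₃ _ hX)
        have b2 : s₃ (u t + h * v t) t ≤ S₃ :=
          (le_abs_self _).trans (by rw [← Real.norm_eq_abs]; exact hS₃ _ hX)
        have b3 : |gu t + h * gv t| ^ d₃ ≤ 1 + (|gu t| + |gv t|) := by
          calc |gu t + h * gv t| ^ d₃ ≤ (|gu t| + |gv t|) ^ d₃ :=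
                Real.rpow_le_rpow (abs_nonneg _) hY hd₃.1.le
            _ ≤ 1 + (|gu t| + |gv t|) :=
                rpow_le_one_add' (by positivity) hd₃.1 hd₃.2
        have hb := mul_le_mul b1 b3 (Real.rpow_nonneg (abs_nonneg _) _) hR₃0
        linarith
      have efin : |F' h t| ≤ (R₂ * (1 + (|gu t| + |gv t|) ^ 2) + S₂) * Mv +
          (R₃ * (1 + (|gu t| + |gv t|)) + S₃) * |gv t| := by
        have step : |F' h t| ≤ |Lx L (u t + h * v t) (gu t + h * gv t) t| * |v t| +
            |Ly L (u t + h * v t) (gu t + h * gv t) t| * |gv t| := by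
          rw [hF']
          exact (abs_add_le _ _).trans (by rw [abs_mul, abs_mul])
        refine step.trans (add_le_add ?_ ?_)
        · exact mul_le_mul e2 hvt (abs_nonneg _) (by positivity)
        · exact mul_le_mul_of_nonneg_right e3 (abs_nonneg _)
      rw [Real.norm_eq_abs]
      refine efin.trans ?_
      rw [hWt, hC₁]
      set p := |gu t| with hp
      set q := |gv t| with hq
      have hp0 : 0 ≤ p := abs_nonneg _
      have hq0 : 0 ≤ q := abs_nonneg _
      have hp2 : p ^ 2 = gu t ^ 2 := sq_abs _
      have hq2 : q ^ 2 = gv t ^ 2 := sq_abs _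
      rw [← hp2, ← hq2]
      set w : ℝ := 1 + p ^ 2 + q ^ 2 with hw
      have hw0 : (0:ℝ) ≤ w := by positivity
      have hw1 : (1:ℝ) ≤ w := by nlinarith [sq_nonneg p, sq_nonneg q]
      have k1 : 1 + (p + q) ^ 2 ≤ 2 * w := by nlinarith [sq_nonneg (p - q)]
      have k2 : (1 + (p + q)) * q ≤ 2 * w := by
        nlinarith [sq_nonneg (p - q), sq_nonneg (1 - q), hp0, hq0]
      have c1 : (R₂ * (1 + (p + q) ^ 2) + S₂) * Mv ≤ ((2 * R₂ + S₂) * Mv) * w := by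
        have e1 : R₂ * (1 + (p + q) ^ 2) ≤ R₂ * (2 * w) := mul_le_mul_of_nonneg_left k1 hR₂0
        have e2 : S₂ ≤ S₂ * w := le_mul_of_one_le_right hS₂0 hw1
        have e3 : R₂ * (1 + (p + q) ^ 2) + S₂ ≤ (2 * R₂ + S₂) * w := by linarith [e1, e2]
        calc (R₂ * (1 + (p + q) ^ 2) + S₂) * Mv ≤ ((2 * R₂ + S₂) * w) * Mv :=
              mul_le_mul_of_nonneg_right e3 hMv0
          _ = ((2 * R₂ + S₂) * Mv) * w := by ring
      have c2 : (R₃ * (1 + (p + q)) + S₃) * q ≤ (2 * R₃ + S₃) * w := by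
        have e3 : R₃ * ((1 + (p + q)) * q) ≤ R₃ * (2 * w) := mul_le_mul_of_nonneg_left k2 hR₃0
        have k3 : q ≤ w := by nlinarith [sq_nonneg (1 - q), sq_nonneg p]
        have e4 : S₃ * q ≤ S₃ * w := mul_le_mul_of_nonneg_left k3 hS₃0
        have e5 : (R₃ * (1 + (p + q)) + S₃) * q = R₃ * ((1 + (p + q)) * q) + S₃ * q := by ring
        rw [e5]; linarith [e3, e4]
      have cC : (2 * R₂ + S₂) * Mv + (2 * R₃ + S₃) ≤
          2 * (R₂ + S₂) * (Mv + 1) + 4 * (R₃ + S₃ + 1) := by nlinarith [hR₂0, hS₂0, hMv0]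
      have cD := mul_le_mul_of_nonneg_right cC hw0
      nlinarith [c1, c2, cD]
    have hF_int : Integrable (F 0) μ := by
      refine Integrable.mono' (hW_int.const_mul (C₀ + 2*R₁ + S₁)) (hF_meas 0) ?_
      filter_upwards [huabs, ae_restrict_mem measurableSet_Ioo] with t hut ht
      have htI : t ∈ Set.Icc a b := Set.Ioo_subset_Icc_self ht
      have hF0 : F 0 t = L (u t) (gu t) t := by rw [hF]; simp
      have hXmem : (u t, t) ∈ (Set.Icc (-M) M) ×ˢ (Set.Icc a b) := by
        refine ⟨Set.mem_Icc.mpr (abs_le.mp (hut.trans (by rw [hM]; linarith))), htI⟩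
      have b0 : |L (u t) 0 t| ≤ C₀ :=
        (by rw [← Real.norm_eq_abs]; exact hC₀ _ hXmem)
      have b1 : r₁ (u t) t ≤ R₁ :=
        (le_abs_self _).trans (by rw [← Real.norm_eq_abs]; exact hR₁ _ hXmem)
      have b2 : s₁ (u t) t ≤ S₁ :=
        (le_abs_self _).trans (by rw [← Real.norm_eq_abs]; exact hS₁ _ hXmem)
      have b3 : |gu t| ^ d₁ ≤ 1 + gu t ^ 2 := by
        have := rpow_le_one_add_sq' (abs_nonneg (gu t)) hd₁.1 hd₁.2
        rwa [sq_abs] at this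
      have hdiff := hL1 (u t) (gu t) t htI
      have habs0 : |L (u t) (gu t) t| ≤ C₀ + (R₁ * (1 + gu t ^ 2) + S₁) := by
        have h1 : |L (u t) (gu t) t| ≤ |L (u t) 0 t| + |L (u t) (gu t) t - L (u t) 0 t| := by
          have := abs_add_le (L (u t) 0 t) (L (u t) (gu t) t - L (u t) 0 t)
          simpa using this
        have h2 : r₁ (u t) t * |gu t| ^ d₁ ≤ R₁ * (1 + gu t ^ 2) :=
          mul_le_mul b1 b3 (Real.rpow_nonneg (abs_nonneg _) _) hR₁0
        linarith [hdiff]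
      rw [Real.norm_eq_abs, hF0]
      refine habs0.trans ?_
      rw [hWt]
      nlinarith [sq_nonneg (gu t), sq_nonneg (gv t), mul_nonneg hR₁0 (sq_nonneg (gv t)),
        mul_nonneg hC₀0 (sq_nonneg (gu t)), mul_nonneg hC₀0 (sq_nonneg (gv t)),
        mul_nonneg hS₁0 (sq_nonneg (gu t)), mul_nonneg hS₁0 (sq_nonneg (gv t)),
        mul_nonneg hR₁0 (sq_nonneg (gu t))]
    have h_diff : ∀ᵐ t ∂μ, ∀ h ∈ Metric.ball (0:ℝ) 1,
        HasDerivAt (fun h' => F h' t) (F' h t) h :=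
      Eventually.of_forall fun t h _ =>
        hasDerivAt_L_line hL (u t) (gu t) t (v t) (gv t) h
    obtain ⟨-, hderiv⟩ := hasDerivAt_integral_of_dominated_loc_of_deriv_le
      (F := F) (F' := F') (x₀ := (0:ℝ)) (bound := fun t => C₁ * W t) (Metric.ball_mem_nhds 0 one_pos)
      (Eventually.of_forall hF_meas) hF_int hF'_meas h_bound hbound_int h_diff
    have hval : (∫ t, F' 0 t ∂μ) = ∫ t in Set.Ioo a b,
        (Lx L (u t) (gu t) t * v t + Ly L (u t) (gu t) t * gv t) := by
      refine integral_congr_ae (Eventually.of_forall fun t => ?_)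
      rw [hF']; simp
    rw [hval] at hderiv
    rw [hasDerivAt_iff_tendsto_slope] at hderiv
    have hJ0 : (∫ t, F 0 t ∂μ) = Jfun a b L u gu := by
      refine integral_congr_ae (Eventually.of_forall fun t => ?_)
      rw [hF]; simp
    refine Tendsto.congr (fun h => ?_) hderiv
    rw [slope_def_field, hJ0, sub_zero]
    rfl
  · -- Part 2: boundedness
    have hcomp : IsCompact ((Set.Icc (-Mu) Mu) ×ˢ (Set.Icc a b)) :=
      isCompact_Icc.prod isCompact_Icc
    obtain ⟨R₂, hR₂⟩ := hcomp.exists_bound_of_continuousOn hr₂.continuousOn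
    obtain ⟨S₂, hS₂⟩ := hcomp.exists_bound_of_continuousOn hs₂.continuousOn
    obtain ⟨R₃, hR₃⟩ := hcomp.exists_bound_of_continuousOn hr₃.continuousOn
    obtain ⟨S₃, hS₃⟩ := hcomp.exists_bound_of_continuousOn hs₃.continuousOn
    have hmempt : ((0:ℝ), a) ∈ (Set.Icc (-Mu) Mu) ×ˢ (Set.Icc a b) := by
      refine ⟨?_, ?_⟩
      · show (0:ℝ) ∈ Set.Icc (-Mu) Mu
        exact Set.mem_Icc.mpr ⟨by linarith, hMu0⟩
      · show a ∈ Set.Icc a b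
        exact ⟨le_rfl, hab.le⟩
    have hR₂0 : 0 ≤ R₂ := le_trans (norm_nonneg _) (hR₂ _ hmempt)
    have hS₂0 : 0 ≤ S₂ := le_trans (norm_nonneg _) (hS₂ _ hmempt)
    have hR₃0 : 0 ≤ R₃ := le_trans (norm_nonneg _) (hR₃ _ hmempt)
    have hS₃0 : 0 ≤ S₃ := le_trans (norm_nonneg _) (hS₃ _ hmempt)
    have hmeasu : AEStronglyMeasurable
        (fun t => ((u t, gu t, t) : ℝ × ℝ × ℝ)) μ :=
      hum.prodMk (hgum.prodMk hid)
    have hLxm : AEStronglyMeasurable (fun t => Lx L (u t) (gu t) t) μ :=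
      cLx.comp_aestronglyMeasurable hmeasu
    have hLym : AEStronglyMeasurable (fun t => Ly L (u t) (gu t) t) μ :=
      cLy.comp_aestronglyMeasurable hmeasu
    -- pointwise bounds
    have hLxbd : ∀ᵐ t ∂μ, |Lx L (u t) (gu t) t| ≤ (R₂ + S₂) * (1 + gu t ^ 2) := by
      filter_upwards [huabs, ae_restrict_mem measurableSet_Ioo] with t hut ht
      have htI : t ∈ Set.Icc a b := Set.Ioo_subset_Icc_self ht
      have hXmem : (u t, t) ∈ (Set.Icc (-Mu) Mu) ×ˢ (Set.Icc a b) :=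
        ⟨Set.mem_Icc.mpr (abs_le.mp hut), htI⟩
      have b1 : r₂ (u t) t ≤ R₂ :=
        (le_abs_self _).trans (by rw [← Real.norm_eq_abs]; exact hR₂ _ hXmem)
      have b2 : s₂ (u t) t ≤ S₂ :=
        (le_abs_self _).trans (by rw [← Real.norm_eq_abs]; exact hS₂ _ hXmem)
      have b3 : |gu t| ^ d₂ ≤ 1 + gu t ^ 2 := by
        have := rpow_le_one_add_sq' (abs_nonneg (gu t)) hd₂.1 hd₂.2
        rwa [sq_abs] at this
      refine (hL2 _ _ t htI).trans ?_
      have hb := mul_le_mul b1 b3 (Real.rpow_nonneg (abs_nonneg _) _) hR₂0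
      nlinarith [sq_nonneg (gu t), mul_nonneg hS₂0 (sq_nonneg (gu t))]
    have hLybd : ∀ᵐ t ∂μ, |Ly L (u t) (gu t) t| ≤ (R₃ + S₃) * (1 + |gu t|) := by
      filter_upwards [huabs, ae_restrict_mem measurableSet_Ioo] with t hut ht
      have htI : t ∈ Set.Icc a b := Set.Ioo_subset_Icc_self ht
      have hXmem : (u t, t) ∈ (Set.Icc (-Mu) Mu) ×ˢ (Set.Icc a b) :=
        ⟨Set.mem_Icc.mpr (abs_le.mp hut), htI⟩
      have b1 : r₃ (u t) t ≤ R₃ :=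
        (le_abs_self _).trans (by rw [← Real.norm_eq_abs]; exact hR₃ _ hXmem)
      have b2 : s₃ (u t) t ≤ S₃ :=
        (le_abs_self _).trans (by rw [← Real.norm_eq_abs]; exact hS₃ _ hXmem)
      have b3 : |gu t| ^ d₃ ≤ 1 + |gu t| := rpow_le_one_add' (abs_nonneg _) hd₃.1 hd₃.2
      refine (hL3 _ _ t htI).trans ?_
      have hb := mul_le_mul b1 b3 (Real.rpow_nonneg (abs_nonneg _) _) hR₃0
      nlinarith [abs_nonneg (gu t), mul_nonneg hS₃0 (abs_nonneg (gu t))]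
    -- integrability of the Lx composite
    have hdom1_int : Integrable (fun t => (R₂ + S₂) * (1 + gu t ^ 2)) μ :=
      ((integrable_const 1).add hgu2.integrable_sq).const_mul _
    have hLx_int : Integrable (fun t => Lx L (u t) (gu t) t) μ := by
      refine Integrable.mono' hdom1_int hLxm ?_
      filter_upwards [hLxbd] with t h
      rwa [Real.norm_eq_abs]
    -- L² bound for the Ly composite
    have hdom2 : MemLp (fun t => (R₃ + S₃) * (1 + |gu t|)) 2 μ :=
      (((memLp_const (1:ℝ)).add hgu2.abs).const_mul _)
    have hLy2 : MemLp (fun t => Ly L (u t) (gu t) t) 2 μ := by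
      refine hdom2.mono hLym ?_
      filter_upwards [hLybd] with t h
      rw [Real.norm_eq_abs]
      refine h.trans (le_abs_self _)
    -- constants
    set Cx : ℝ := ∫ t, (R₂ + S₂) * (1 + gu t ^ 2) ∂μ with hCx
    have hCx0 : 0 ≤ Cx := integral_nonneg fun t => by positivity
    set Cy : ℝ := Real.sqrt (∫ t, ((R₃ + S₃) * (1 + |gu t|)) ^ 2 ∂μ) with hCy
    have hCy0 : 0 ≤ Cy := Real.sqrt_nonneg _
    refine ⟨Kc * Cx + Cy, ?_⟩
    intro v gv hv
    obtain ⟨hvL2, hgv2, hvae, -⟩ := hv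
    have hvm := hvL2.aestronglyMeasurable
    have hgvm := hgv2.aestronglyMeasurable
    set Nv : ℝ := Real.sqrt (∫ t in Set.Ioo a b, gv t ^ 2) with hNv
    have hNv0 : 0 ≤ Nv := Real.sqrt_nonneg _
    have hvabs : ∀ᵐ t ∂μ, |v t| ≤ Kc * Nv := by
      filter_upwards [hvae, ae_restrict_mem measurableSet_Ioo] with t h1 h2
      rw [h1]
      exact tempIL_abs_le a b α σ hab ⟨hα1, hα2⟩ hσ gv hgv2 t (Set.Ioo_subset_Icc_self h2)
    -- integrability of the two summands
    have hint1 : Integrable (fun t => Lx L (u t) (gu t) t * v t) μ := by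
      refine Integrable.mono' (hdom1_int.mul_const (Kc * Nv)) (hLxm.mul hvm) ?_
      filter_upwards [hLxbd, hvabs] with t h1 h2
      rw [Real.norm_eq_abs, abs_mul]
      exact mul_le_mul h1 h2 (abs_nonneg _) (by positivity)
    have hint2 : Integrable (fun t => Ly L (u t) (gu t) t * gv t) μ := by
      refine Integrable.mono'
        ((hLy2.integrable_sq.add hgv2.integrable_sq).const_mul (1/2 : ℝ))
        (hLym.mul hgvm) ?_
      refine Eventually.of_forall fun t => ?_
      rw [Real.norm_eq_abs, abs_mul]
      simp only [Pi.add_apply]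
      nlinarith [sq_nonneg (|Ly L (u t) (gu t) t| - |gv t|), sq_abs (Ly L (u t) (gu t) t),
        sq_abs (gv t), abs_nonneg (Ly L (u t) (gu t) t), abs_nonneg (gv t)]
    -- bound the first integral
    have hbd1 : |∫ t, Lx L (u t) (gu t) t * v t ∂μ| ≤ Cx * (Kc * Nv) := by
      have h1 : |∫ t, Lx L (u t) (gu t) t * v t ∂μ| ≤
          ∫ t, |Lx L (u t) (gu t) t * v t| ∂μ := by
        rw [← Real.norm_eq_abs]
        exact (norm_integral_le_integral_norm _).trans (le_of_eq (by
          refine integral_congr_ae (Eventually.of_forall fun t => ?_)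
          simp [Real.norm_eq_abs, abs_mul]))
      refine h1.trans ?_
      have h2 : ∫ t, |Lx L (u t) (gu t) t * v t| ∂μ ≤
          ∫ t, (R₂ + S₂) * (1 + gu t ^ 2) * (Kc * Nv) ∂μ := by
        refine integral_mono_ae hint1.abs (hdom1_int.mul_const _) ?_
        filter_upwards [hLxbd, hvabs] with t h1' h2'
        rw [abs_mul]
        exact mul_le_mul h1' h2' (abs_nonneg _) (by positivity)
      refine h2.trans (le_of_eq ?_)
      rw [integral_mul_const]
    -- bound the second integral via Hölder
    have hbd2 : |∫ t, Ly L (u t) (gu t) t * gv t ∂μ| ≤ Cy * Nv := by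
      have h1 : |∫ t, Ly L (u t) (gu t) t * gv t ∂μ| ≤
          ∫ t, ‖Ly L (u t) (gu t) t‖ * ‖gv t‖ ∂μ := by
        rw [← Real.norm_eq_abs]
        exact (norm_integral_le_integral_norm _).trans (le_of_eq (by
          refine integral_congr_ae (Eventually.of_forall fun t => ?_)
          simp [norm_mul]))
      have hpq : Real.HolderConjugate 2 2 := Real.HolderConjugate.two_two
      have hofReal : (ENNReal.ofReal 2) = 2 := by norm_num
      have holder := integral_mul_norm_le_Lp_mul_Lq (μ := μ) hpq
        (by rw [hofReal]; exact hLy2) (by rw [hofReal]; exact hgv2)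
      have hnorm2 : ∀ f : ℝ → ℝ, ∀ s, ‖f s‖ ^ (2:ℝ) = f s ^ 2 := by
        intro f s
        rw [Real.rpow_two, Real.norm_eq_abs, sq_abs]
      simp only [hnorm2] at holder
      refine (h1.trans (holder.trans ?_))
      rw [← Real.sqrt_eq_rpow, ← Real.sqrt_eq_rpow]
      refine mul_le_mul (Real.sqrt_le_sqrt ?_) (le_of_eq rfl) (Real.sqrt_nonneg _) hCy0
      refine integral_mono_ae hLy2.integrable_sq (hdom2.integrable_sq) ?_
      filter_upwards [hLybd] with t h
      have h0 : (0:ℝ) ≤ (R₃ + S₃) * (1 + |gu t|) := by positivity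
      nlinarith [abs_nonneg (Ly L (u t) (gu t) t), sq_abs (Ly L (u t) (gu t) t)]
    -- combine
    have hsplit : |∫ t in Set.Ioo a b,
        (Lx L (u t) (gu t) t * v t + Ly L (u t) (gu t) t * gv t)| ≤
        Cx * (Kc * Nv) + Cy * Nv := by
      have := integral_add hint1 hint2
      calc |∫ t in Set.Ioo a b,
          (Lx L (u t) (gu t) t * v t + Ly L (u t) (gu t) t * gv t)|
          = |(∫ t, Lx L (u t) (gu t) t * v t ∂μ) +
            (∫ t, Ly L (u t) (gu t) t * gv t ∂μ)| := by rw [← this]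
        _ ≤ |∫ t, Lx L (u t) (gu t) t * v t ∂μ| +
            |∫ t, Ly L (u t) (gu t) t * gv t ∂μ| := abs_add_le _ _
        _ ≤ Cx * (Kc * Nv) + Cy * Nv := add_le_add hbd1 hbd2
    refine hsplit.trans ?_
    have hNvle : Nv ≤ H0norm a b v gv := by
      rw [H0norm, hNv]
      refine Real.sqrt_le_sqrt ?_
      have : (0:ℝ) ≤ ∫ x in Set.Ioo a b, v x ^ 2 := integral_nonneg fun t => sq_nonneg _
      linarith
    calc Cx * (Kc * Nv) + Cy * Nv = (Kc * Cx + Cy) * Nv := by ring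
      _ ≤ (Kc * Cx + Cy) * H0norm a b v gv := by
          refine mul_le_mul_of_nonneg_left hNvle ?_
          positivity
end

section
/- Let a < b, α ∈ (1/2,1), σ > 0 and let L : ℝ×ℝ×[a,b] → ℝ be C¹ satisfying (L1), (L2), (L3), (L4) and (L5), and assume additionally that for every t ∈ [a,b] the map (x,y) ↦ L(x,y,t) is strictly convex. Then the minimizer of J over H_0^{α,σ}(a,b) is unique: if u₁, u₂ ∈ H_0^{α,σ}(a,b) both minimize J over H_0^{α,σ}(a,b), then u₁ = u₂ and ^C D_{a+}^{α,σ}u₁ = ^C D_{a+}^{α,σ}u₂. -/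
open MeasureTheory Set Filter

/-! ### Auxiliary lemmas -/

lemma intervalIntegrable_rpow_sub {x c p : ℝ} (hp : -1 < p) :
    IntervalIntegrable (fun s : ℝ => (x - s) ^ p) volume c x := by
  have := (intervalIntegral.intervalIntegrable_rpow' (a := x - c) (b := 0) hp).comp_sub_left x
  simpa using this

lemma integral_rpow_sub {x c p : ℝ} (hcx : c ≤ x) (hp : -1 < p) :
    ∫ s in c..x, (x - s) ^ p = (x - c) ^ (p + 1) / (p + 1) := by
  rw [intervalIntegral.integral_comp_sub_left (fun t : ℝ => t ^ p) x,
    integral_rpow (Or.inl hp)]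
  rw [sub_self, Real.zero_rpow (by linarith)]
  ring

lemma kernel_sq_le {α σ x s : ℝ} (hσ : 0 < σ) (hs : s < x) :
    ((x - s) ^ (α - 1) * Real.exp (-σ * (x - s))) ^ 2 ≤ (x - s) ^ (2 * α - 2) := by
  have hxs : (0:ℝ) < x - s := by linarith
  have h1 : Real.exp (-σ * (x - s)) ≤ 1 := by
    apply Real.exp_le_one_iff.2; nlinarith
  have h2 : ((x - s) ^ (α - 1)) ^ 2 = (x - s) ^ (2 * α - 2) := by
    rw [← Real.rpow_natCast ((x - s) ^ (α - 1)) 2, ← Real.rpow_mul hxs.le]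
    norm_num; ring_nf
  have hk : (0:ℝ) ≤ (x - s) ^ (α - 1) := Real.rpow_nonneg hxs.le _
  have he : (0:ℝ) ≤ Real.exp (-σ * (x - s)) := (Real.exp_pos _).le
  calc ((x - s) ^ (α - 1) * Real.exp (-σ * (x - s))) ^ 2
      = ((x - s) ^ (α - 1)) ^ 2 * (Real.exp (-σ * (x - s))) ^ 2 := by ring
    _ ≤ ((x - s) ^ (α - 1)) ^ 2 * 1 := by
        have : (Real.exp (-σ * (x - s))) ^ 2 ≤ 1 := by nlinarith
        exact mul_le_mul_of_nonneg_left this (sq_nonneg _)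
    _ = (x - s) ^ (2 * α - 2) := by rw [mul_one, h2]

lemma kernelmul_integrableOn {a b α σ x : ℝ}
    (hα : α ∈ Set.Ioo (1/2 : ℝ) 1) (hσ : 0 < σ)
    (g : ℝ → ℝ) (hg : MemLp g 2 (volume.restrict (Set.Ioo a b)))
    (hx : x ∈ Set.Ioc a b) :
    IntegrableOn
      (fun s => (x - s) ^ (α - 1) * Real.exp (-σ * (x - s)) * g s) (Set.Ioo a x) volume := by
  have hp : (-1:ℝ) < 2 * α - 2 := by have := hα.1; linarith
  have hsub : Set.Ioo a x ⊆ Set.Ioo a b := Set.Ioo_subset_Ioo_right hx.2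
  have hgsq : IntegrableOn (fun s => g s ^ 2) (Set.Ioo a x) volume :=
    IntegrableOn.mono_set (hg.integrable_sq) hsub
  have hpow : IntegrableOn (fun s => (x - s) ^ (2 * α - 2)) (Set.Ioo a x) volume := by
    have := (intervalIntegrable_rpow_sub (x := x) (c := a) hp)
    rw [intervalIntegrable_iff_integrableOn_Ioo_of_le hx.1.le] at this
    exact this
  have hφ : IntegrableOn (fun s => ((x - s) ^ (2 * α - 2) + g s ^ 2) / 2) (Set.Ioo a x) volume :=
    (hpow.add hgsq).div_const 2
  have hmeas : AEStronglyMeasurable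
      (fun s => (x - s) ^ (α - 1) * Real.exp (-σ * (x - s)) * g s)
      (volume.restrict (Set.Ioo a x)) := by
    have hk : Measurable (fun s : ℝ => (x - s) ^ (α - 1) * Real.exp (-σ * (x - s))) :=
      (((measurable_const.sub measurable_id).pow measurable_const)).mul
        ((measurable_const.mul (measurable_const.sub measurable_id)).exp)
    exact (hk.aestronglyMeasurable).mul
      (hg.aestronglyMeasurable.mono_measure (Measure.restrict_mono hsub le_rfl))
  apply Integrable.mono' hφ hmeas
  filter_upwards [ae_restrict_mem measurableSet_Ioo] with s hs
  have h1 : |(x - s) ^ (α - 1) * Real.exp (-σ * (x - s)) * g s| ≤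
      (((x - s) ^ (α - 1) * Real.exp (-σ * (x - s))) ^ 2 + g s ^ 2) / 2 := by
    rw [abs_mul]
    nlinarith [sq_nonneg (|(x - s) ^ (α - 1) * Real.exp (-σ * (x - s))| - |g s|),
      sq_abs ((x - s) ^ (α - 1) * Real.exp (-σ * (x - s))), sq_abs (g s),
      abs_nonneg ((x - s) ^ (α - 1) * Real.exp (-σ * (x - s))), abs_nonneg (g s)]
  have h2 := kernel_sq_le (α := α) (σ := σ) hσ hs.2
  rw [Real.norm_eq_abs]
  linarith

lemma tempIL_bound {a b α σ : ℝ} (hab : a < b)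
    (hα : α ∈ Set.Ioo (1/2 : ℝ) 1) (hσ : 0 < σ)
    (g : ℝ → ℝ) (hg : MemLp g 2 (volume.restrict (Set.Ioo a b))) :
    ∀ x ∈ Set.Ioc a b, |tempIL a α σ g x| ≤
      |1 / Real.Gamma α| *
        (((b - a) ^ (2 * α - 1) / (2 * α - 1) + ∫ t in Set.Ioo a b, g t ^ 2) / 2) := by
  intro x hx
  have hp : (-1:ℝ) < 2 * α - 2 := by have := hα.1; linarith
  have hax : a ≤ x := hx.1.le
  have hsub : Set.Ioo a x ⊆ Set.Ioo a b := Set.Ioo_subset_Ioo_right hx.2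
  have hgsq : IntegrableOn (fun s => g s ^ 2) (Set.Ioo a b) volume := hg.integrable_sq
  have hpow : IntegrableOn (fun s => (x - s) ^ (2 * α - 2)) (Set.Ioo a x) volume := by
    have := (intervalIntegrable_rpow_sub (x := x) (c := a) hp)
    rwa [intervalIntegrable_iff_integrableOn_Ioo_of_le hax] at this
  have hφ : IntegrableOn (fun s => ((x - s) ^ (2 * α - 2) + g s ^ 2) / 2)
      (Set.Ioo a x) volume := (hpow.add (hgsq.mono_set hsub)).div_const 2
  rw [tempIL, abs_mul]
  apply mul_le_mul_of_nonneg_left _ (abs_nonneg _)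
  rw [intervalIntegral.integral_of_le hax, integral_Ioc_eq_integral_Ioo]
  calc |∫ s in Set.Ioo a x, (x - s) ^ (α - 1) * Real.exp (-σ * (x - s)) * g s|
      ≤ ∫ s in Set.Ioo a x, ((x - s) ^ (2 * α - 2) + g s ^ 2) / 2 := by
        rw [← Real.norm_eq_abs]
        apply norm_integral_le_of_norm_le hφ
        filter_upwards [ae_restrict_mem measurableSet_Ioo] with s hs
        rw [Real.norm_eq_abs, abs_mul]
        have h2 := kernel_sq_le (α := α) (σ := σ) hσ hs.2
        nlinarith [sq_nonneg (|(x - s) ^ (α - 1) * Real.exp (-σ * (x - s))| - |g s|),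
          sq_abs ((x - s) ^ (α - 1) * Real.exp (-σ * (x - s))), sq_abs (g s),
          abs_nonneg ((x - s) ^ (α - 1) * Real.exp (-σ * (x - s))), abs_nonneg (g s),
          abs_mul ((x - s) ^ (α - 1) * Real.exp (-σ * (x - s))) (g s)]
    _ = ((∫ s in Set.Ioo a x, (x - s) ^ (2 * α - 2)) + ∫ s in Set.Ioo a x, g s ^ 2) / 2 := by
        rw [integral_div, integral_add hpow (hgsq.mono_set hsub)]
    _ ≤ ((b - a) ^ (2 * α - 1) / (2 * α - 1) + ∫ t in Set.Ioo a b, g t ^ 2) / 2 := by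
        have e1 : (∫ s in Set.Ioo a x, (x - s) ^ (2 * α - 2)) =
            (x - a) ^ (2 * α - 1) / (2 * α - 1) := by
          rw [← integral_Ioc_eq_integral_Ioo, ← intervalIntegral.integral_of_le hax,
            integral_rpow_sub hax hp]
          ring_nf
        have e2 : (x - a) ^ (2 * α - 1) ≤ (b - a) ^ (2 * α - 1) :=
          Real.rpow_le_rpow (by linarith) (by linarith [hx.2]) (by linarith [hα.1])
        have e3 : (∫ s in Set.Ioo a x, g s ^ 2) ≤ ∫ t in Set.Ioo a b, g t ^ 2 := by
          apply setIntegral_mono_set hgsq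
          · filter_upwards with s using sq_nonneg _
          · exact HasSubset.Subset.eventuallyLE hsub
        have h21 : (0:ℝ) < 2 * α - 1 := by linarith [hα.1]
        rw [e1]
        have hA : (x - a) ^ (2 * α - 1) / (2 * α - 1) ≤
            (b - a) ^ (2 * α - 1) / (2 * α - 1) := by gcongr
        linarith

lemma tempIL_midpoint {a b α σ x : ℝ}
    (hα : α ∈ Set.Ioo (1/2 : ℝ) 1) (hσ : 0 < σ)
    (g₁ g₂ : ℝ → ℝ) (hg₁ : MemLp g₁ 2 (volume.restrict (Set.Ioo a b)))
    (hg₂ : MemLp g₂ 2 (volume.restrict (Set.Ioo a b))) (hx : x ∈ Set.Ioc a b) :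
    tempIL a α σ (fun s => (g₁ s + g₂ s) / 2) x =
      (tempIL a α σ g₁ x + tempIL a α σ g₂ x) / 2 := by
  have h1 : IntervalIntegrable
      (fun s => (x - s) ^ (α - 1) * Real.exp (-σ * (x - s)) * g₁ s) volume a x := by
    rw [intervalIntegrable_iff_integrableOn_Ioo_of_le hx.1.le]
    exact kernelmul_integrableOn hα hσ g₁ hg₁ hx
  have h2 : IntervalIntegrable
      (fun s => (x - s) ^ (α - 1) * Real.exp (-σ * (x - s)) * g₂ s) volume a x := by
    rw [intervalIntegrable_iff_integrableOn_Ioo_of_le hx.1.le]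
    exact kernelmul_integrableOn hα hσ g₂ hg₂ hx
  simp only [tempIL]
  rw [show (fun s => (x - s) ^ (α - 1) * Real.exp (-σ * (x - s)) * ((g₁ s + g₂ s) / 2)) =
      (fun s => ((x - s) ^ (α - 1) * Real.exp (-σ * (x - s)) * g₁ s +
        (x - s) ^ (α - 1) * Real.exp (-σ * (x - s)) * g₂ s) / 2) from funext fun s => by ring]
  rw [intervalIntegral.integral_div, intervalIntegral.integral_add h1 h2]
  ring

lemma abs_rpow_le_one_add_sq {y d : ℝ} (hd0 : 0 < d) (hd2 : d ≤ 2) :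
    |y| ^ d ≤ 1 + y ^ 2 := by
  rcases le_total (|y|) 1 with h | h
  · have : |y| ^ d ≤ 1 := Real.rpow_le_one (abs_nonneg y) h hd0.le
    nlinarith [sq_nonneg y]
  · have h1 : |y| ^ d ≤ |y| ^ (2:ℝ) := Real.rpow_le_rpow_of_exponent_le h hd2
    have h2 : |y| ^ (2:ℝ) = y ^ 2 := by
      rw [show (2:ℝ) = ((2:ℕ):ℝ) by norm_num, Real.rpow_natCast, sq_abs]
    nlinarith

lemma L_integrable {a b : ℝ} (hab : a < b) (L : ℝ → ℝ → ℝ → ℝ)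
    (hLc : Continuous (fun p : ℝ × ℝ × ℝ => L p.1 p.2.1 p.2.2))
    {d₁ : ℝ} (hd₁ : d₁ ∈ Set.Ioc (0:ℝ) 2) (r₁ s₁ : ℝ → ℝ → ℝ)
    (hr₁ : Continuous (fun p : ℝ × ℝ => r₁ p.1 p.2))
    (hs₁ : Continuous (fun p : ℝ × ℝ => s₁ p.1 p.2))
    (hr₁0 : ∀ x t, 0 ≤ r₁ x t) (hs₁0 : ∀ x t, 0 ≤ s₁ x t)
    (hL1 : ∀ x y t, t ∈ Set.Icc a b →
      |L x y t - L x 0 t| ≤ r₁ x t * |y| ^ d₁ + s₁ x t)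
    (u g : ℝ → ℝ)
    (hu : AEStronglyMeasurable u (volume.restrict (Set.Ioo a b)))
    (hg : MemLp g 2 (volume.restrict (Set.Ioo a b)))
    (M : ℝ) (hM : ∀ᵐ t ∂(volume.restrict (Set.Ioo a b)), |u t| ≤ M) :
    Integrable (fun t => L (u t) (g t) t) (volume.restrict (Set.Ioo a b)) := by
  have hK : IsCompact ((Set.Icc (-M) M) ×ˢ (Set.Icc a b)) :=
    (isCompact_Icc).prod isCompact_Icc
  have hF : Continuous (fun p : ℝ × ℝ => |L p.1 0 p.2| + r₁ p.1 p.2 + s₁ p.1 p.2) := by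
    have : Continuous (fun p : ℝ × ℝ => L p.1 0 p.2) := by
      have h0 : Continuous (fun p : ℝ × ℝ => (p.1, (0:ℝ), p.2)) := by fun_prop
      exact hLc.comp h0
    exact ((this.abs.add hr₁).add hs₁)
  obtain ⟨C, hC⟩ : ∃ C : ℝ, ∀ p ∈ (Set.Icc (-M) M) ×ˢ (Set.Icc a b),
      |L p.1 0 p.2| + r₁ p.1 p.2 + s₁ p.1 p.2 ≤ C := by
    rcases (hK.image hF).bddAbove with ⟨C, hC⟩
    exact ⟨C, fun p hp => hC ⟨p, hp, rfl⟩⟩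
  have hmeas : AEStronglyMeasurable (fun t => L (u t) (g t) t)
      (volume.restrict (Set.Ioo a b)) := by
    have : AEStronglyMeasurable (fun t => (u t, g t, t)) (volume.restrict (Set.Ioo a b)) :=
      hu.prodMk (hg.aestronglyMeasurable.prodMk aestronglyMeasurable_id)
    exact hLc.comp_aestronglyMeasurable this
  have hdom : Integrable (fun t => |C| * (2 + g t ^ 2) + |C| * (1 + g t ^ 2))
      (volume.restrict (Set.Ioo a b)) := by
    have := hg.integrable_sq
    apply Integrable.add <;>
      exact (((integrable_const _).add this).const_mul _)
  apply Integrable.mono' hdom hmeas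
  filter_upwards [hM, ae_restrict_mem measurableSet_Ioo] with t htM ht
  have htI : t ∈ Set.Icc a b := ⟨ht.1.le, ht.2.le⟩
  have hpmem : (u t, t) ∈ (Set.Icc (-M) M) ×ˢ (Set.Icc a b) := by
    constructor
    · exact abs_le.1 htM
    · exact htI
  have hCp : |L (u t) 0 t| + r₁ (u t) t + s₁ (u t) t ≤ C := hC (u t, t) hpmem
  have h1 := hL1 (u t) (g t) t htI
  have h2 : |g t| ^ d₁ ≤ 1 + g t ^ 2 := abs_rpow_le_one_add_sq hd₁.1 hd₁.2
  have h3 : r₁ (u t) t * |g t| ^ d₁ ≤ |C| * (1 + g t ^ 2) := by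
    have hr := hr₁0 (u t) t
    have : r₁ (u t) t ≤ |C| := by
      have := abs_nonneg (L (u t) 0 t)
      have := hs₁0 (u t) t
      have := le_abs_self C
      linarith
    have hsq : (0:ℝ) ≤ 1 + g t ^ 2 := by nlinarith [sq_nonneg (g t)]
    calc r₁ (u t) t * |g t| ^ d₁ ≤ |C| * |g t| ^ d₁ :=
          mul_le_mul_of_nonneg_right this (Real.rpow_nonneg (abs_nonneg _) _)
      _ ≤ |C| * (1 + g t ^ 2) := mul_le_mul_of_nonneg_left h2 (abs_nonneg _)
  rw [Real.norm_eq_abs]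
  have h4 : |L (u t) (g t) t| ≤ |L (u t) 0 t| + r₁ (u t) t * |g t| ^ d₁ + s₁ (u t) t := by
    have h6 := abs_sub_abs_le_abs_sub (L (u t) (g t) t) (L (u t) 0 t)
    linarith [h1, h6]
  have h5 : |L (u t) 0 t| + s₁ (u t) t ≤ |C| + |C| := by
    have := hr₁0 (u t) t
    have := le_abs_self C
    have := abs_nonneg C
    linarith [hCp]
  have : |L (u t) (g t) t| ≤ |C| + |C| + |C| * (1 + g t ^ 2) := by linarith
  have hsq : (0:ℝ) ≤ g t ^ 2 := sq_nonneg _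
  nlinarith [abs_nonneg C]

/-- Under (L1)–(L5) and strict convexity of `(x,y) ↦ L(x,y,t)` for every `t`, the
minimizer of `J` over `H₀^{α,σ}(a,b)` is unique (as an element of `H₀^{α,σ}(a,b)`,
i.e. up to a.e. equality, together with its tempered Caputo derivative). -/
theorem tonelli_uniqueness
    (a b α σ : ℝ) (hab : a < b) (hα : α ∈ Set.Ioo (1/2 : ℝ) 1) (hσ : 0 < σ)
    (L : ℝ → ℝ → ℝ → ℝ)
    (hL : ContDiff ℝ 1 (fun p : ℝ × ℝ × ℝ => L p.1 p.2.1 p.2.2))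
    (d₁ : ℝ) (hd₁ : d₁ ∈ Set.Ioc (0:ℝ) 2) (r₁ s₁ : ℝ → ℝ → ℝ)
    (hr₁ : Continuous (fun p : ℝ × ℝ => r₁ p.1 p.2))
    (hs₁ : Continuous (fun p : ℝ × ℝ => s₁ p.1 p.2))
    (hr₁0 : ∀ x t, 0 ≤ r₁ x t) (hs₁0 : ∀ x t, 0 ≤ s₁ x t)
    (hL1 : ∀ x y t, t ∈ Set.Icc a b →
      |L x y t - L x 0 t| ≤ r₁ x t * |y| ^ d₁ + s₁ x t)
    (d₂ : ℝ) (hd₂ : d₂ ∈ Set.Ioc (0:ℝ) 2) (r₂ s₂ : ℝ → ℝ → ℝ)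
    (hr₂ : Continuous (fun p : ℝ × ℝ => r₂ p.1 p.2))
    (hs₂ : Continuous (fun p : ℝ × ℝ => s₂ p.1 p.2))
    (hr₂0 : ∀ x t, 0 ≤ r₂ x t) (hs₂0 : ∀ x t, 0 ≤ s₂ x t)
    (hL2 : ∀ x y t, t ∈ Set.Icc a b →
      |Lx L x y t| ≤ r₂ x t * |y| ^ d₂ + s₂ x t)
    (d₃ : ℝ) (hd₃ : d₃ ∈ Set.Ioc (0:ℝ) 1) (r₃ s₃ : ℝ → ℝ → ℝ)
    (hr₃ : Continuous (fun p : ℝ × ℝ => r₃ p.1 p.2))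
    (hs₃ : Continuous (fun p : ℝ × ℝ => s₃ p.1 p.2))
    (hr₃0 : ∀ x t, 0 ≤ r₃ x t) (hs₃0 : ∀ x t, 0 ≤ s₃ x t)
    (hL3 : ∀ x y t, t ∈ Set.Icc a b →
      |Ly L x y t| ≤ r₃ x t * |y| ^ d₃ + s₃ x t)
    (ζ d₄ : ℝ) (hζ : 0 < ζ) (hd₄ : d₄ ∈ Set.Ico (1:ℝ) 2)
    (c₁ : ℝ → ℝ → ℝ) (c₂ c₃ : ℝ → ℝ)
    (hc₁ : Continuous (fun p : ℝ × ℝ => c₁ p.1 p.2)) (hc₁ζ : ∀ x t, ζ ≤ c₁ x t)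
    (hc₂ : Continuous c₂) (hc₃ : Continuous c₃)
    (hL4 : ∀ x y t, t ∈ Set.Icc a b →
      c₁ x t * y ^ 2 + c₂ t * |x| ^ d₄ + c₃ t ≤ L x y t)
    (hL5 : ∀ t ∈ Set.Icc a b,
      ConvexOn ℝ Set.univ (fun p : ℝ × ℝ => L p.1 p.2 t))
    (hstrict : ∀ t ∈ Set.Icc a b,
      StrictConvexOn ℝ Set.univ (fun p : ℝ × ℝ => L p.1 p.2 t)) :
    ∀ u₁ g₁ u₂ g₂ : ℝ → ℝ, MemH0 a b α σ u₁ g₁ → MemH0 a b α σ u₂ g₂ →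
      (∀ u g : ℝ → ℝ, MemH0 a b α σ u g → Jfun a b L u₁ g₁ ≤ Jfun a b L u g) →
      (∀ u g : ℝ → ℝ, MemH0 a b α σ u g → Jfun a b L u₂ g₂ ≤ Jfun a b L u g) →
      (∀ᵐ x ∂(MeasureTheory.volume.restrict (Set.Ioo a b)), u₁ x = u₂ x) ∧
      (∀ᵐ x ∂(MeasureTheory.volume.restrict (Set.Ioo a b)), g₁ x = g₂ x) := by
  intro u₁ g₁ u₂ g₂ h₁ h₂ hmin₁ hmin₂
  obtain ⟨hu₁L, hg₁L, hae₁, hb₁⟩ := h₁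
  obtain ⟨hu₂L, hg₂L, hae₂, hb₂⟩ := h₂
  -- midpoint
  set um : ℝ → ℝ := fun t => (u₁ t + u₂ t) / 2 with hum
  set gm : ℝ → ℝ := fun t => (g₁ t + g₂ t) / 2 with hgm
  have humL : MemLp um 2 (volume.restrict (Set.Ioo a b)) := by
    have heq : um = ((2:ℝ)⁻¹) • (u₁ + u₂) := by
      funext t; simp [hum, Pi.smul_apply, smul_eq_mul]; ring
    rw [heq]; exact (hu₁L.add hu₂L).const_smul _
  have hgmL : MemLp gm 2 (volume.restrict (Set.Ioo a b)) := by
    have heq : gm = ((2:ℝ)⁻¹) • (g₁ + g₂) := by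
      funext t; simp [hgm, Pi.smul_apply, smul_eq_mul]; ring
    rw [heq]; exact (hg₁L.add hg₂L).const_smul _
  have haem : ∀ᵐ x ∂(volume.restrict (Set.Ioo a b)), um x = tempIL a α σ gm x := by
    filter_upwards [hae₁, hae₂, ae_restrict_mem measurableSet_Ioo] with x e1 e2 hx
    rw [hgm, tempIL_midpoint hα hσ g₁ g₂ hg₁L hg₂L ⟨hx.1, hx.2.le⟩, hum, ← e1, ← e2]
  have hbm : tempIL a α σ gm b = 0 := by
    rw [hgm, tempIL_midpoint hα hσ g₁ g₂ hg₁L hg₂L ⟨hab, le_rfl⟩, hb₁, hb₂]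
    norm_num
  have hmid : MemH0 a b α σ um gm := ⟨humL, hgmL, haem, hbm⟩
  -- a.e. bounds for u₁, u₂, um
  set M₁ : ℝ := |1 / Real.Gamma α| *
    (((b - a) ^ (2 * α - 1) / (2 * α - 1) + ∫ t in Set.Ioo a b, g₁ t ^ 2) / 2) with hM₁
  set M₂ : ℝ := |1 / Real.Gamma α| *
    (((b - a) ^ (2 * α - 1) / (2 * α - 1) + ∫ t in Set.Ioo a b, g₂ t ^ 2) / 2) with hM₂
  have hMu₁ : ∀ᵐ t ∂(volume.restrict (Set.Ioo a b)), |u₁ t| ≤ M₁ := by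
    filter_upwards [hae₁, ae_restrict_mem measurableSet_Ioo] with t e1 ht
    rw [e1]; exact tempIL_bound hab hα hσ g₁ hg₁L t ⟨ht.1, ht.2.le⟩
  have hMu₂ : ∀ᵐ t ∂(volume.restrict (Set.Ioo a b)), |u₂ t| ≤ M₂ := by
    filter_upwards [hae₂, ae_restrict_mem measurableSet_Ioo] with t e2 ht
    rw [e2]; exact tempIL_bound hab hα hσ g₂ hg₂L t ⟨ht.1, ht.2.le⟩
  have hMum : ∀ᵐ t ∂(volume.restrict (Set.Ioo a b)), |um t| ≤ (M₁ + M₂) / 2 := by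
    filter_upwards [hMu₁, hMu₂] with t e1 e2
    rw [hum]
    calc |(u₁ t + u₂ t) / 2| ≤ (|u₁ t| + |u₂ t|) / 2 := by
          rw [abs_div]; simp only [abs_two]
          exact div_le_div_of_nonneg_right (abs_add_le _ _) (by norm_num)
      _ ≤ (M₁ + M₂) / 2 := by linarith
  -- integrability of the three Lagrangian compositions
  have I₁ := L_integrable hab L hL.continuous hd₁ r₁ s₁ hr₁ hs₁ hr₁0 hs₁0 hL1
    u₁ g₁ hu₁L.aestronglyMeasurable hg₁L M₁ hMu₁
  have I₂ := L_integrable hab L hL.continuous hd₁ r₁ s₁ hr₁ hs₁ hr₁0 hs₁0 hL1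
    u₂ g₂ hu₂L.aestronglyMeasurable hg₂L M₂ hMu₂
  have Im := L_integrable hab L hL.continuous hd₁ r₁ s₁ hr₁ hs₁ hr₁0 hs₁0 hL1
    um gm humL.aestronglyMeasurable hgmL ((M₁ + M₂) / 2) hMum
  -- J values
  have hJ12 : Jfun a b L u₁ g₁ = Jfun a b L u₂ g₂ :=
    le_antisymm (hmin₁ u₂ g₂ ⟨hu₂L, hg₂L, hae₂, hb₂⟩) (hmin₂ u₁ g₁ ⟨hu₁L, hg₁L, hae₁, hb₁⟩)
  have hJm : Jfun a b L u₁ g₁ ≤ Jfun a b L um gm := hmin₁ um gm hmid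
  -- the nonnegative defect function
  set D : ℝ → ℝ := fun t =>
    (L (u₁ t) (g₁ t) t + L (u₂ t) (g₂ t) t) / 2 - L (um t) (gm t) t with hD
  have IA : Integrable (fun t => (L (u₁ t) (g₁ t) t + L (u₂ t) (g₂ t) t) / 2)
      (volume.restrict (Set.Ioo a b)) := by
    exact (I₁.add I₂).div_const 2
  have hInt : Integrable D (volume.restrict (Set.Ioo a b)) := by
    exact IA.sub Im
  have key : ∀ t, ((1:ℝ)/2) • ((u₁ t, g₁ t) : ℝ × ℝ) + ((1:ℝ)/2) • ((u₂ t, g₂ t) : ℝ × ℝ)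
      = (um t, gm t) := by
    intro t
    rw [hum, hgm]
    simp only [Prod.smul_mk, Prod.mk_add_mk, smul_eq_mul, Prod.mk.injEq]
    constructor <;> ring
  have hnn : 0 ≤ᵐ[volume.restrict (Set.Ioo a b)] D := by
    filter_upwards [ae_restrict_mem measurableSet_Ioo] with t ht
    have hcv := hL5 t ⟨ht.1.le, ht.2.le⟩
    have h := hcv.2 (Set.mem_univ ((u₁ t, g₁ t) : ℝ × ℝ))
      (Set.mem_univ ((u₂ t, g₂ t) : ℝ × ℝ))
      (by norm_num : (0:ℝ) ≤ 1/2) (by norm_num : (0:ℝ) ≤ 1/2) (by norm_num)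
    rw [key t] at h
    simp only [smul_eq_mul] at h
    simp only [hD, Pi.zero_apply]
    linarith
  have hsplit : (∫ t in Set.Ioo a b, D t) =
      (Jfun a b L u₁ g₁ + Jfun a b L u₂ g₂) / 2 - Jfun a b L um gm := by
    simp only [hD]
    rw [integral_sub IA Im, integral_div, integral_add I₁ I₂]
    rfl
  have hle : (∫ t in Set.Ioo a b, D t) ≤ 0 := by
    rw [hsplit, ← hJ12]
    linarith
  have hge : (0:ℝ) ≤ ∫ t in Set.Ioo a b, D t := integral_nonneg_of_ae hnn
  have hzero : (∫ t in Set.Ioo a b, D t) = 0 := le_antisymm hle hge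
  have haeD : D =ᵐ[volume.restrict (Set.Ioo a b)] 0 :=
    (integral_eq_zero_iff_of_nonneg_ae hnn hInt).1 hzero
  have hpair : ∀ᵐ t ∂(volume.restrict (Set.Ioo a b)), u₁ t = u₂ t ∧ g₁ t = g₂ t := by
    filter_upwards [haeD, ae_restrict_mem measurableSet_Ioo] with t ht0 ht
    by_contra hne
    have hne' : ((u₁ t, g₁ t) : ℝ × ℝ) ≠ (u₂ t, g₂ t) := by
      intro hcon
      exact hne ⟨congrArg Prod.fst hcon, congrArg Prod.snd hcon⟩
    have hsc := hstrict t ⟨ht.1.le, ht.2.le⟩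
    have h := hsc.2 (Set.mem_univ ((u₁ t, g₁ t) : ℝ × ℝ))
      (Set.mem_univ ((u₂ t, g₂ t) : ℝ × ℝ)) hne'
      (by norm_num : (0:ℝ) < 1/2) (by norm_num : (0:ℝ) < 1/2) (by norm_num)
    rw [key t] at h
    simp only [smul_eq_mul] at h
    simp only [hD, Pi.zero_apply] at ht0
    linarith
  exact ⟨hpair.mono fun t h => h.1, hpair.mono fun t h => h.2⟩
end

section
/- Let L : ℝ×ℝ×[a,b] → ℝ be C¹ and nonnegative, and suppose there exists μ ∈ (0,2) such that ∂L/∂x(x,y,t)·x + ∂L/∂y(x,y,t)·y ≤ μ·L(x,y,t) for all (x,y,t) ∈ ℝ×ℝ×[a,b]. Then for every λ ≥ 1 and all (x,y,t) ∈ ℝ×ℝ×[a,b], L(λx, λy, t) ≤ λ^μ · L(x,y,t). -/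
open MeasureTheory Set Filter

/-- If `L ≥ 0` is `C¹` and satisfies `∂L/∂x·x + ∂L/∂y·y ≤ μ·L` with `μ ∈ (0,2)`,
then `L(λx, λy, t) ≤ λ^μ L(x,y,t)` for every `λ ≥ 1`. -/
theorem homogeneity_estimate
    (a b μ : ℝ) (hab : a < b)
    (L : ℝ → ℝ → ℝ → ℝ)
    (hL : ContDiff ℝ 1 (fun p : ℝ × ℝ × ℝ => L p.1 p.2.1 p.2.2))
    (hLpos : ∀ x y t, t ∈ Set.Icc a b → 0 ≤ L x y t)
    (hμ : μ ∈ Set.Ioo (0:ℝ) 2)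
    (hM3 : ∀ x y t, t ∈ Set.Icc a b →
      Lx L x y t * x + Ly L x y t * y ≤ μ * L x y t) :
    ∀ lam : ℝ, 1 ≤ lam → ∀ x y t, t ∈ Set.Icc a b →
      L (lam * x) (lam * y) t ≤ lam ^ μ * L x y t := by
  intro lam hlam x y t ht
  have hfd : Differentiable ℝ (fun p : ℝ × ℝ × ℝ => L p.1 p.2.1 p.2.2) :=
    hL.differentiable one_ne_zero
  set f : ℝ × ℝ × ℝ → ℝ := fun p => L p.1 p.2.1 p.2.2 with hf
  -- fderiv applied to basis directions gives the partial derivatives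
  have key : ∀ p : ℝ × ℝ × ℝ,
      (fderiv ℝ f p) (x, y, 0) = Lx L p.1 p.2.1 p.2.2 * x + Ly L p.1 p.2.1 p.2.2 * y := by
    intro p
    have h1 : HasDerivAt (fun z => L z p.2.1 p.2.2) ((fderiv ℝ f p) (1, 0, 0)) p.1 := by
      have hc : HasDerivAt (fun z : ℝ => ((z, p.2.1, p.2.2) : ℝ × ℝ × ℝ))
          ((1 : ℝ), ((0 : ℝ), (0 : ℝ))) p.1 :=
        HasDerivAt.prodMk (hasDerivAt_id p.1) (hasDerivAt_const p.1 (p.2.1, p.2.2))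
      exact (hfd p).hasFDerivAt.comp_hasDerivAt p.1 hc
    have h2 : HasDerivAt (fun z => L p.1 z p.2.2) ((fderiv ℝ f p) (0, 1, 0)) p.2.1 := by
      have hc : HasDerivAt (fun z : ℝ => ((p.1, z, p.2.2) : ℝ × ℝ × ℝ))
          ((0 : ℝ), ((1 : ℝ), (0 : ℝ))) p.2.1 :=
        HasDerivAt.prodMk (hasDerivAt_const p.2.1 p.1) (HasDerivAt.prodMk (hasDerivAt_id p.2.1) (hasDerivAt_const p.2.1 p.2.2))
      exact (hfd p).hasFDerivAt.comp_hasDerivAt p.2.1 hc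
    have e1 : Lx L p.1 p.2.1 p.2.2 = (fderiv ℝ f p) (1, 0, 0) := by
      simp only [Lx]; exact h1.deriv
    have e2 : Ly L p.1 p.2.1 p.2.2 = (fderiv ℝ f p) (0, 1, 0) := by
      simp only [Ly]; exact h2.deriv
    have hxy : ((x, y, 0) : ℝ × ℝ × ℝ) = x • ((1:ℝ), (0:ℝ), (0:ℝ)) + y • ((0:ℝ), (1:ℝ), (0:ℝ)) := by
      simp [Prod.ext_iff]
    rw [hxy, map_add, (fderiv ℝ f p).map_smul, (fderiv ℝ f p).map_smul, ← e1, ← e2,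
      smul_eq_mul, smul_eq_mul]
    ring
  -- derivative of φ s = L (s*x) (s*y) t
  have hφ : ∀ s : ℝ, HasDerivAt (fun s => L (s * x) (s * y) t)
      (Lx L (s * x) (s * y) t * x + Ly L (s * x) (s * y) t * y) s := by
    intro s
    have hc : HasDerivAt (fun s : ℝ => ((s * x, s * y, t) : ℝ × ℝ × ℝ)) ((x, y, 0)) s :=
      HasDerivAt.prodMk (hasDerivAt_mul_const x) (HasDerivAt.prodMk (hasDerivAt_mul_const y) (hasDerivAt_const s t))
    have := (hfd (s * x, s * y, t)).hasFDerivAt.comp_hasDerivAt s hc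
    rw [key (s * x, s * y, t)] at this
    exact this
  set φ : ℝ → ℝ := fun s => L (s * x) (s * y) t with hφdef
  set ψ : ℝ → ℝ := fun s => s ^ (-μ) * φ s with hψdef
  -- derivative of ψ and its sign
  have hψ : ∀ s : ℝ, 0 < s →
      HasDerivAt ψ ((-μ * s ^ (-μ - 1)) * φ s + s ^ (-μ) *
        (Lx L (s * x) (s * y) t * x + Ly L (s * x) (s * y) t * y)) s := by
    intro s hs
    have hrpow : HasDerivAt (fun s : ℝ => s ^ (-μ)) (-μ * s ^ (-μ - 1)) s := by
      simpa using Real.hasDerivAt_rpow_const (x := s) (p := -μ) (Or.inl hs.ne')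
    exact hrpow.mul (hφ s)
  have hψneg : ∀ s : ℝ, 1 ≤ s →
      (-μ * s ^ (-μ - 1)) * φ s + s ^ (-μ) *
        (Lx L (s * x) (s * y) t * x + Ly L (s * x) (s * y) t * y) ≤ 0 := by
    intro s hs
    have hs0 : (0 : ℝ) < s := lt_of_lt_of_le one_pos hs
    have h1 : s * (Lx L (s * x) (s * y) t * x + Ly L (s * x) (s * y) t * y) ≤ μ * φ s := by
      have := hM3 (s * x) (s * y) t ht
      have e : Lx L (s * x) (s * y) t * (s * x) + Ly L (s * x) (s * y) t * (s * y)
          = s * (Lx L (s * x) (s * y) t * x + Ly L (s * x) (s * y) t * y) := by ring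
      rw [e] at this
      exact this
    have hpow : s ^ (-μ - 1) * s = s ^ (-μ) := by
      rw [← Real.rpow_add_one hs0.ne']
      norm_num
    have hA : (0 : ℝ) ≤ s ^ (-μ - 1) := Real.rpow_nonneg hs0.le _
    rw [← hpow]
    nlinarith [mul_le_mul_of_nonneg_left h1 hA]
  -- ψ is antitone on [1, lam]
  have hanti : AntitoneOn ψ (Set.Icc 1 lam) := by
    apply AntitoneOn.mono (s := Set.Ici (1:ℝ)) ?_ (Set.Icc_subset_Ici_self)
    apply antitoneOn_of_deriv_nonpos (convex_Ici 1)
    · intro s hs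
      have hs0 : (0 : ℝ) < s := lt_of_lt_of_le one_pos hs
      exact (hψ s hs0).continuousAt.continuousWithinAt
    · intro s hs
      rw [interior_Ici] at hs
      have hs0 : (0 : ℝ) < s := lt_trans one_pos hs
      exact (hψ s hs0).differentiableAt.differentiableWithinAt
    · intro s hs
      rw [interior_Ici] at hs
      have hs0 : (0 : ℝ) < s := lt_trans one_pos hs
      rw [(hψ s hs0).deriv]
      exact hψneg s hs.le
  have h1mem : (1 : ℝ) ∈ Set.Icc 1 lam := ⟨le_refl 1, hlam⟩
  have hlmem : lam ∈ Set.Icc 1 lam := ⟨hlam, le_refl lam⟩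
  have hle : ψ lam ≤ ψ 1 := hanti h1mem hlmem hlam
  have hψ1 : ψ 1 = L x y t := by
    simp [hψdef, hφdef]
  rw [hψ1] at hle
  have hlam0 : (0 : ℝ) < lam := lt_of_lt_of_le one_pos hlam
  have hmul : (0 : ℝ) < lam ^ μ := Real.rpow_pos_of_pos hlam0 μ
  have hcancel : lam ^ μ * lam ^ (-μ) = 1 := by
    rw [← Real.rpow_add hlam0]
    norm_num
  calc L (lam * x) (lam * y) t = lam ^ μ * (lam ^ (-μ) * φ lam) := by
        rw [← mul_assoc, hcancel, one_mul]
    _ ≤ lam ^ μ * L x y t := by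
        apply mul_le_mul_of_nonneg_left _ hmul.le
        exact hle
end
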